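/- arXiv:2405.00671 — 5 statements merged into one kernel-verified Lean document; each statement's English description precedes it below -/
import Mathlib

section
/- Let G be a group and σ : G → G a group homomorphism. Let N be a subgroup of G with σ(N) ⊆ N, and assume the Lang map is surjective on N, i.e. for every n ∈ N there exists n₀ ∈ N with n₀⁻¹σ(n₀) = n. Set X = {g ∈ G : g⁻¹σ(g) ∈ N}. Then: (i) X is stable under right multiplication by N; (ii) every element of X lies in the same right N-coset as some element of G^σ; (iii) two elements h, h' ∈ G^σ satisfy h' ∈ h·N if and only if h' ∈ h·N^σ. Consequently the inclusion G^σ ⊆ X induces a bijection G^σ/N^σ → X/N between the set of right N^σ-cosets in G^σ and the set of right N-cosets meeting X. -/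
/-! The Lang map `L(g) = g⁻¹ σ(g)` satisfies `L(gn) = n⁻¹ L(g) σ(n)`, and its fibres are the
cosets `G^σ g`. So if `L(g) = L(n₀)` with `n₀ ∈ N`, then `g n₀⁻¹` is `σ`-fixed; and if `h` and
`hn` are both fixed, so is `n`. -/

namespace MonoidHom

variable {G : Type*} [Group G] (σ : G →* G)

theorem inv_mul_map_mul (g n : G) :
    (g * n)⁻¹ * σ (g * n) = n⁻¹ * (g⁻¹ * σ g) * σ n := by
  simp only [map_mul, mul_inv_rev, mul_assoc]

theorem map_mul_inv_eq_self_iff (a b : G) :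
    σ (a * b⁻¹) = a * b⁻¹ ↔ a⁻¹ * σ a = b⁻¹ * σ b := by
  rw [map_mul, map_inv]
  constructor <;> intro h
  · calc a⁻¹ * σ a = a⁻¹ * (σ a * (σ b)⁻¹) * σ b := by group
      _ = b⁻¹ * σ b := by rw [h]; group
  · calc σ a * (σ b)⁻¹ = a * (a⁻¹ * σ a) * (σ b)⁻¹ := by group
      _ = a * b⁻¹ := by rw [h]; group

theorem map_eq_self_of_map_mul_eq_self {h n : G} (hh : σ h = h) (hhn : σ (h * n) = h * n) :
    σ n = n := by
  rw [map_mul, hh] at hhn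
  exact mul_left_cancel hhn

end MonoidHom

open MonoidHom in
/-- Point-level content of `X/N ≅ G^σ/N^σ` (equation (3.2) in Lemma 3.3):
with the Lang map surjective on `N`, the set `X = {g : g⁻¹σ(g) ∈ N}` is stable under
right `N`-multiplication, every element of `X` is in the same right `N`-coset as a
`σ`-fixed element, and two `σ`-fixed elements are in the same right `N`-coset iff they
are in the same right `N^σ`-coset; hence `G^σ/N^σ ≅ X/N`. -/
theorem stmt_3 {G : Type*} [Group G] (σ : G →* G) (N : Subgroup G)
    (hσN : ∀ n ∈ N, σ n ∈ N)
    (hLang : ∀ n ∈ N, ∃ n₀ ∈ N, n₀⁻¹ * σ n₀ = n) :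
    (∀ g, g⁻¹ * σ g ∈ N → ∀ n ∈ N, (g * n)⁻¹ * σ (g * n) ∈ N) ∧
    (∀ g, g⁻¹ * σ g ∈ N → ∃ h, σ h = h ∧ ∃ n ∈ N, g = h * n) ∧
    (∀ h h', σ h = h → σ h' = h' →
      ((∃ n ∈ N, h' = h * n) ↔ ∃ n ∈ N, σ n = n ∧ h' = h * n)) := by
  refine ⟨fun g hg n hn => ?_, fun g hg => ?_, fun h h' hh hh' => ⟨?_, ?_⟩⟩
  · rw [inv_mul_map_mul]
    exact N.mul_mem (N.mul_mem (N.inv_mem hn) hg) (hσN n hn)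
  · obtain ⟨n₀, hn₀, hL⟩ := hLang _ hg
    exact ⟨g * n₀⁻¹, (map_mul_inv_eq_self_iff σ g n₀).2 hL.symm, n₀, hn₀, by group⟩
  · rintro ⟨n, hn, rfl⟩
    exact ⟨n, hn, map_eq_self_of_map_mul_eq_self σ hh hh', rfl⟩
  · rintro ⟨n, hn, -, rfl⟩
    exact ⟨n, hn, rfl⟩
end

section
/- Let G be a group and σ : G → G a group homomorphism. Let D be a normal subgroup of G with σ(D) ⊆ D, let N' be a subgroup of G contained in D, and let T be a subgroup of G such that τ·N'·τ⁻¹ = N' for every τ ∈ T. Assume that for every x ∈ G with x⁻¹σ(x) ∈ D there exists τ ∈ T with σ(τ) = τ and x·τ⁻¹ ∈ D. Then {x ∈ G : x⁻¹σ(x) ∈ N'} is the union over τ ∈ T^σ of the sets {y ∈ D : y⁻¹σ(y) ∈ N'}·τ; that is, x ∈ G satisfies x⁻¹σ(x) ∈ N' if and only if x = y·τ for some τ ∈ T with σ(τ) = τ and some y ∈ D with y⁻¹σ(y) ∈ N'. -/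
/-!
Right translation by a `σ`-fixed `τ` twists the Lang map `x ↦ x⁻¹ σ(x)` by conjugation with
`τ⁻¹`, which preserves `N'` for `τ ∈ T`; so the set `{x | x⁻¹ σ(x) ∈ N'}` is stable under right
translation by `T^σ`. Given such an `x`, the lifting hypothesis supplies `τ ∈ T^σ` with
`y = x τ⁻¹ ∈ D`, and `y` lies in the set again.
-/

theorem MonoidHom.inv_mul_map_mul_of_map_eq {G : Type*} [Group G] (σ : G →* G) {τ : G}
    (hστ : σ τ = τ) (x : G) :
    (x * τ)⁻¹ * σ (x * τ) = τ⁻¹ * (x⁻¹ * σ x) * τ := by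
  rw [map_mul, hστ]
  group

theorem MonoidHom.inv_mul_map_mul_mem_of_fixed {G : Type*} [Group G] (σ : G →* G)
    {N T : Subgroup G} (hT : ∀ τ ∈ T, ∀ n, n ∈ N ↔ τ * n * τ⁻¹ ∈ N)
    {τ : G} (hτT : τ ∈ T) (hστ : σ τ = τ) {x : G} (hx : x⁻¹ * σ x ∈ N) :
    (x * τ)⁻¹ * σ (x * τ) ∈ N := by
  rw [σ.inv_mul_map_mul_of_map_eq hστ]
  simpa only [inv_inv] using (hT τ⁻¹ (inv_mem hτT) _).mp hx

theorem stmt_5_general {G : Type*} [Group G] (σ : G →* G) (D N' T : Subgroup G)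
    (hN'D : N' ≤ D)
    (hT : ∀ τ ∈ T, ∀ n, n ∈ N' ↔ τ * n * τ⁻¹ ∈ N')
    (hlift : ∀ x : G, x⁻¹ * σ x ∈ D → ∃ τ ∈ T, σ τ = τ ∧ x * τ⁻¹ ∈ D) :
    ∀ x : G, x⁻¹ * σ x ∈ N' ↔
      ∃ τ ∈ T, σ τ = τ ∧ ∃ y ∈ D, y⁻¹ * σ y ∈ N' ∧ x = y * τ := by
  intro x
  constructor
  · intro hx
    obtain ⟨τ, hτT, hστ, hyD⟩ := hlift x (hN'D hx)
    have hστ' : σ τ⁻¹ = τ⁻¹ := by rw [map_inv, hστ]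
    exact ⟨τ, hτT, hστ, x * τ⁻¹, hyD,
      σ.inv_mul_map_mul_mem_of_fixed hT (inv_mem hτT) hστ' hx, by group⟩
  · rintro ⟨τ, hτT, hστ, y, -, hyN, rfl⟩
    exact σ.inv_mul_map_mul_mem_of_fixed hT hτT hστ hyN

/-- Point-level content of Lemma 3.5: the Lusztig variety for `G` decomposes as the
union over `τ ∈ T^σ` of translates of the corresponding variety for the derived
group `D`. -/
theorem stmt_5 {G : Type*} [Group G] (σ : G →* G) (D N' T : Subgroup G)
    [D.Normal]
    (hσD : ∀ d ∈ D, σ d ∈ D)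
    (hN'D : N' ≤ D)
    (hT : ∀ τ ∈ T, ∀ n, n ∈ N' ↔ τ * n * τ⁻¹ ∈ N')
    (hlift : ∀ x : G, x⁻¹ * σ x ∈ D → ∃ τ ∈ T, σ τ = τ ∧ x * τ⁻¹ ∈ D) :
    ∀ x : G, x⁻¹ * σ x ∈ N' ↔
      ∃ τ ∈ T, σ τ = τ ∧ ∃ y ∈ D, y⁻¹ * σ y ∈ N' ∧ x = y * τ :=
  stmt_5_general σ D N' T hN'D hT hlift
end

section
/- Let G be a group and σ : G → G a group homomorphism such that the Lang map g ↦ g⁻¹σ(g) is surjective on G. Let U and N be subgroups of G. Set X = {g ∈ G : g⁻¹σ(g) ∈ σ(U)}, X' = {g' ∈ G : g'⁻¹σ(g') ∈ σ(N)}, and Σ = {(x, x', y) ∈ σ(U) × σ(N) × G : x·σ(y) = y·x'}. Then the map (g, g') ↦ (g⁻¹σ(g), g'⁻¹σ(g'), g⁻¹g') sends X × X' into Σ, is surjective onto Σ, is constant on the orbits of the diagonal left G^σ-action h·(g, g') = (h·g, h·g'), and separates these orbits. Consequently it induces a bijection G^σ\(X × X') → Σ. -/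
/-!
Everything follows from the identity `y * L(g * y) = L(g) * σ(y)` for the Lang map
`L(g) = g⁻¹ * σ(g)`. It says that the triple attached to `(g, g')` satisfies the equation of `Σ`,
and, read backwards, that `(g, g * y)` is a preimage of `(x, x', y) ∈ Σ` as soon as `L(g) = x`,
which the surjectivity of `L` provides. Two points with the same Lang value differ by a
`σ`-fixed element on the left, which gives the separation of orbits.
-/

namespace MonoidHom

variable {G : Type*} [Group G] (σ : G →* G)

def lang (g : G) : G := g⁻¹ * σ g

theorem mul_lang_mul (g y : G) : y * σ.lang (g * y) = σ.lang g * σ y := by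
  simp only [lang, map_mul, mul_inv_rev, mul_assoc, mul_inv_cancel_left]

theorem lang_mul_of_map_eq {h : G} (hh : σ h = h) (g : G) : σ.lang (h * g) = σ.lang g := by
  simp only [lang, map_mul, hh, mul_inv_rev, mul_assoc, inv_mul_cancel_left]

theorem map_mul_inv_eq_of_lang_eq {g g₁ : G} (h : σ.lang g = σ.lang g₁) :
    σ (g₁ * g⁻¹) = g₁ * g⁻¹ := by
  have hσ : σ g₁ = g₁ * g⁻¹ * σ g := by
    rw [mul_assoc, ← lang, h, lang, mul_inv_cancel_left]
  rw [map_mul, map_inv, hσ, mul_inv_cancel_right]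

end MonoidHom

/-- Point-level content of the isomorphism
`X_{T,B} ×_{G^σ} X_{M,P} ≅ Σ` from Section 4.2: the map
`(g,g') ↦ (g⁻¹σ(g), g'⁻¹σ(g'), g⁻¹g')` sends `X × X'` into `Σ`, is surjective onto
`Σ`, is constant on diagonal `G^σ`-orbits, and separates them; hence it induces a
bijection `G^σ\(X × X') → Σ`. -/
theorem stmt_6 {G : Type*} [Group G] (σ : G →* G)
    (hLang : ∀ g : G, ∃ h : G, h⁻¹ * σ h = g)
    (U N : Subgroup G) :
    -- (1) the image triple satisfies the defining equation of Σ
    (∀ g g' : G, g⁻¹ * σ g ∈ U.map σ → g'⁻¹ * σ g' ∈ N.map σ →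
      (g⁻¹ * σ g) * σ (g⁻¹ * g') = (g⁻¹ * g') * (g'⁻¹ * σ g')) ∧
    -- (2) surjectivity onto Σ
    (∀ x x' y : G, x ∈ U.map σ → x' ∈ N.map σ → x * σ y = y * x' →
      ∃ g g' : G, g⁻¹ * σ g ∈ U.map σ ∧ g'⁻¹ * σ g' ∈ N.map σ ∧
        x = g⁻¹ * σ g ∧ x' = g'⁻¹ * σ g' ∧ y = g⁻¹ * g') ∧
    -- (3) constancy on diagonal G^σ-orbits
    (∀ h g g' : G, σ h = h →
      ((h * g)⁻¹ * σ (h * g), (h * g')⁻¹ * σ (h * g'), (h * g)⁻¹ * (h * g'))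
        = (g⁻¹ * σ g, g'⁻¹ * σ g', g⁻¹ * g')) ∧
    -- (4) separation of orbits, hence the induced map G^σ\(X × X') → Σ is bijective
    (∀ g g' g₁ g₁' : G,
      (g⁻¹ * σ g, g'⁻¹ * σ g', g⁻¹ * g')
        = (g₁⁻¹ * σ g₁, g₁'⁻¹ * σ g₁', g₁⁻¹ * g₁') →
      ∃ h : G, σ h = h ∧ g₁ = h * g ∧ g₁' = h * g') := by
  refine ⟨fun g g' _ _ => ?_, fun x x' y hx hx' hxy => ?_, fun h g g' hh => ?_,
    fun g g' g₁ g₁' heq => ?_⟩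
  · have key := σ.mul_lang_mul g (g⁻¹ * g')
    rw [mul_inv_cancel_left] at key
    exact key.symm
  · obtain ⟨g, rfl⟩ := hLang x
    have hx'_eq : σ.lang (g * y) = x' := mul_left_cancel (hxy ▸ σ.mul_lang_mul g y)
    exact ⟨g, g * y, hx, (hx'_eq.symm ▸ hx' : σ.lang (g * y) ∈ _), rfl, hx'_eq.symm, by group⟩
  · show (σ.lang (h * g), σ.lang (h * g'), _) = (σ.lang g, σ.lang g', _)
    rw [σ.lang_mul_of_map_eq hh, σ.lang_mul_of_map_eq hh, mul_inv_rev, mul_assoc,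
      inv_mul_cancel_left]
  · simp only [Prod.mk.injEq] at heq
    obtain ⟨hlang, -, hdiff⟩ := heq
    refine ⟨g₁ * g⁻¹, σ.map_mul_inv_eq_of_lang_eq hlang, by group, ?_⟩
    rw [mul_assoc, hdiff, mul_inv_cancel_left]
end

section
/- Let G be a group and σ : G → G a group homomorphism. Let M' be a subgroup of G with σ(M') ⊆ M', and let U be a subgroup of G. Set S = {(u, μ) ∈ (U ∩ M') × M' : u·μ·σ(μ)⁻¹ ∈ σ(U)} and X = {g ∈ M' : g⁻¹σ(g) ∈ σ(U)}. Then the map (u, μ) ↦ (u·μ)⁻¹ sends S into X, is surjective onto X (for g ∈ X the pair (1, g⁻¹) is a preimage), and for each g ∈ X the fiber over g is exactly {(u, u⁻¹·g⁻¹) : u ∈ U ∩ M'}; in particular each fiber is in bijection with U ∩ M'. -/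
/-!
For `g = (u μ)⁻¹` one has `g⁻¹ σ(g) = u μ σ(μ)⁻¹ σ(u)⁻¹`, and `σ(u) ∈ σ(U)` once `u ∈ U`; so the
condition defining `S` at `(u, μ)` is exactly the condition defining `X` at `(u μ)⁻¹`. In the fibre
over `g`, the equation `(u μ)⁻¹ = g` determines `μ = u⁻¹ g⁻¹`, which lies in `M'` whenever `u` and
`g` do.
-/

namespace LangFiber

variable {G : Type*} [Group G] (σ : G →* G) (U : Subgroup G)

theorem inv_inv_mul_map_inv (u μ : G) :
    ((u * μ)⁻¹)⁻¹ * σ (u * μ)⁻¹ = u * μ * (σ μ)⁻¹ * (σ u)⁻¹ := by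
  simp only [inv_inv, map_inv, map_mul, mul_inv_rev, mul_assoc]

theorem inv_inv_mul_map_inv_mem_map_iff {u : G} (hu : u ∈ U) (μ : G) :
    ((u * μ)⁻¹)⁻¹ * σ (u * μ)⁻¹ ∈ U.map σ ↔ u * μ * (σ μ)⁻¹ ∈ U.map σ := by
  rw [inv_inv_mul_map_inv, Subgroup.mul_mem_cancel_right _ (inv_mem (U.mem_map_of_mem σ hu))]

end LangFiber

open LangFiber in
theorem stmt_10_general {G : Type*} [Group G] (σ : G →* G) (M' U : Subgroup G) :
    -- (1) the map sends S into X
    (∀ u μ : G, u ∈ U → u ∈ M' → μ ∈ M' → u * μ * (σ μ)⁻¹ ∈ U.map σ →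
      (u * μ)⁻¹ ∈ M' ∧ ((u * μ)⁻¹)⁻¹ * σ ((u * μ)⁻¹) ∈ U.map σ) ∧
    -- (2) surjectivity: for g ∈ X, the pair (1, g⁻¹) lies in S and maps to g
    (∀ g : G, g ∈ M' → g⁻¹ * σ g ∈ U.map σ →
      (1 : G) ∈ U ∧ (1 : G) ∈ M' ∧ g⁻¹ ∈ M' ∧
        (1 : G) * g⁻¹ * (σ g⁻¹)⁻¹ ∈ U.map σ ∧ ((1 : G) * g⁻¹)⁻¹ = g) ∧
    -- (3) the fiber over g ∈ X is exactly {(u, u⁻¹·g⁻¹) : u ∈ U ∩ M'}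
    (∀ g : G, g ∈ M' → g⁻¹ * σ g ∈ U.map σ → ∀ u μ : G,
      ((u ∈ U ∧ u ∈ M' ∧ μ ∈ M' ∧ u * μ * (σ μ)⁻¹ ∈ U.map σ) ∧ (u * μ)⁻¹ = g) ↔
        (u ∈ U ∧ u ∈ M' ∧ μ = u⁻¹ * g⁻¹)) := by
  refine ⟨?_, ?_, ?_⟩
  · intro u μ hu huM hμM hS
    exact ⟨inv_mem (mul_mem huM hμM), (inv_inv_mul_map_inv_mem_map_iff σ U hu μ).2 hS⟩
  · intro g hg hX
    exact ⟨one_mem U, one_mem M', inv_mem hg, by simpa using hX, by group⟩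
  · intro g hg hX u μ
    constructor
    · rintro ⟨⟨hu, huM, -, -⟩, rfl⟩
      exact ⟨hu, huM, by group⟩
    · rintro ⟨hu, huM, rfl⟩
      have hmul : u * (u⁻¹ * g⁻¹) = g⁻¹ := mul_inv_cancel_left u g⁻¹
      refine ⟨⟨hu, huM, mul_mem (inv_mem huM) (inv_mem hg), ?_⟩, by rw [hmul, inv_inv]⟩
      exact (inv_inv_mul_map_inv_mem_map_iff σ U hu _).1 (by simpa only [hmul, inv_inv] using hX)

/-- Final step in the proof of Proposition 4.10: the map `(u,μ) ↦ (u·μ)⁻¹` sends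
`S = {(u,μ) ∈ (U ∩ M') × M' : u·μ·σ(μ)⁻¹ ∈ σ(U)}` onto
`X = {g ∈ M' : g⁻¹σ(g) ∈ σ(U)}`, with `(1, g⁻¹)` a preimage of `g`, and the fiber
over `g` is exactly `{(u, u⁻¹·g⁻¹) : u ∈ U ∩ M'}`; in particular each fiber is in
bijection with `U ∩ M'`. -/
theorem stmt_10 {G : Type*} [Group G] (σ : G →* G) (M' U : Subgroup G)
    (hσM' : ∀ m ∈ M', σ m ∈ M') :
    -- (1) the map sends S into X
    (∀ u μ : G, u ∈ U → u ∈ M' → μ ∈ M' → u * μ * (σ μ)⁻¹ ∈ U.map σ →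
      (u * μ)⁻¹ ∈ M' ∧ ((u * μ)⁻¹)⁻¹ * σ ((u * μ)⁻¹) ∈ U.map σ) ∧
    -- (2) surjectivity: for g ∈ X, the pair (1, g⁻¹) lies in S and maps to g
    (∀ g : G, g ∈ M' → g⁻¹ * σ g ∈ U.map σ →
      (1 : G) ∈ U ∧ (1 : G) ∈ M' ∧ g⁻¹ ∈ M' ∧
        (1 : G) * g⁻¹ * (σ g⁻¹)⁻¹ ∈ U.map σ ∧ ((1 : G) * g⁻¹)⁻¹ = g) ∧
    -- (3) the fiber over g ∈ X is exactly {(u, u⁻¹·g⁻¹) : u ∈ U ∩ M'}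
    (∀ g : G, g ∈ M' → g⁻¹ * σ g ∈ U.map σ → ∀ u μ : G,
      ((u ∈ U ∧ u ∈ M' ∧ μ ∈ M' ∧ u * μ * (σ μ)⁻¹ ∈ U.map σ) ∧ (u * μ)⁻¹ = g) ↔
        (u ∈ U ∧ u ∈ M' ∧ μ = u⁻¹ * g⁻¹)) :=
  stmt_10_general σ M' U
end

section
/- Let G be a group and σ : G → G a group homomorphism. Let K be a normal subgroup of G with σ(K) ⊆ K, let B be a subgroup of K, and let U be a subgroup of G with U ∩ K ⊆ B. Let x̃ ∈ G be such that u := x̃⁻¹σ(x̃) lies in U and u·B·u⁻¹ = B. Then for every k ∈ K: (x̃·k)⁻¹σ(x̃·k) ∈ U·B if and only if (x̃·k·x̃⁻¹)⁻¹σ(x̃·k·x̃⁻¹) ∈ x̃·B·x̃⁻¹, where U·B denotes the set of products {u'·b : u' ∈ U, b ∈ B}. -/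
/-!
Write `L g = g⁻¹ σ(g)` for the Lang map and `u = L x̃`. For `k ∈ K` both conditions are
about `y = L (x̃k) = k⁻¹ u σ(k)`: the left one says `y ∈ U·B`, and since
`L (x̃kx̃⁻¹) = x̃ (y u⁻¹) x̃⁻¹` the right one says `y u⁻¹ ∈ B`. Normality of `K` and
`σ(K) ⊆ K` put `y u⁻¹` in `K`. If `y = u'b`, then `y u⁻¹ = (u'u⁻¹)(u b u⁻¹)` with
`u b u⁻¹ ∈ B ⊆ K`, so `u'u⁻¹ ∈ U ∩ K ⊆ B`; conversely `y = u (u⁻¹ (y u⁻¹) u) ∈ u B`.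
-/

section

variable {G : Type*} [Group G]

def langMap (σ : G →* G) (g : G) : G := g⁻¹ * σ g

variable (σ : G →* G)

theorem langMap_mul (g h : G) : langMap σ (g * h) = h⁻¹ * langMap σ g * σ h := by
  simp only [langMap, map_mul]; group

theorem langMap_conj (g h : G) :
    langMap σ (g * h * g⁻¹) = g * (langMap σ (g * h) * (langMap σ g)⁻¹) * g⁻¹ := by
  simp only [langMap, map_mul, map_inv]; group

theorem langMap_mul_mul_inv_mem {K : Subgroup G} [K.Normal] (hσK : ∀ k ∈ K, σ k ∈ K)
    (g : G) {k : G} (hk : k ∈ K) : langMap σ (g * k) * (langMap σ g)⁻¹ ∈ K := by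
  have hconj : langMap σ g * σ k * (langMap σ g)⁻¹ ∈ K :=
    ‹K.Normal›.conj_mem _ (hσK k hk) _
  rw [langMap_mul, mul_assoc, mul_assoc, ← mul_assoc (langMap σ g)]
  exact mul_mem (inv_mem hk) hconj

end

theorem exists_eq_mul_iff_mul_inv_mem {G : Type*} [Group G] {K B U : Subgroup G}
    (hBK : B ≤ K) (hUK : ∀ u ∈ U, u ∈ K → u ∈ B) {u : G} (hu : u ∈ U)
    (huB : u ∈ Subgroup.normalizer B) {y : G} (hy : y * u⁻¹ ∈ K) :
    (∃ u' ∈ U, ∃ b ∈ B, y = u' * b) ↔ y * u⁻¹ ∈ B := by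
  constructor
  · rintro ⟨u', hu', b, hb, rfl⟩
    have hub : u * b * u⁻¹ ∈ B := (Subgroup.mem_normalizer_iff.mp huB b).mp hb
    have hsplit : u' * b * u⁻¹ = u' * u⁻¹ * (u * b * u⁻¹) := by group
    rw [hsplit] at hy ⊢
    have hu'K : u' * u⁻¹ ∈ K := (K.mul_mem_cancel_right (hBK hub)).mp hy
    exact mul_mem (hUK _ (mul_mem hu' (inv_mem hu)) hu'K) hub
  · intro hyB
    refine ⟨u, hu, u⁻¹ * (y * u⁻¹) * u, ?_, by group⟩
    simpa using (Subgroup.mem_normalizer_iff''.mp huB _).mp hyB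

/-- Change-of-variables step in Section 5.1 identifying the fiber of the
depth-lowering projection: for `k ∈ K`, `(x̃k)⁻¹σ(x̃k) ∈ U·B` iff
`(x̃kx̃⁻¹)⁻¹σ(x̃kx̃⁻¹) ∈ x̃Bx̃⁻¹`, where `u = x̃⁻¹σ(x̃) ∈ U` and `uBu⁻¹ = B`. -/
theorem stmt_12 {G : Type*} [Group G] (σ : G →* G) (K B U : Subgroup G)
    [K.Normal]
    (hσK : ∀ k ∈ K, σ k ∈ K)
    (hBK : B ≤ K)
    (hUK : ∀ u ∈ U, u ∈ K → u ∈ B)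
    (xt : G) (hu : xt⁻¹ * σ xt ∈ U)
    (huB : ∀ b, b ∈ B ↔ (xt⁻¹ * σ xt) * b * (xt⁻¹ * σ xt)⁻¹ ∈ B) :
    ∀ k ∈ K,
      ((∃ u' ∈ U, ∃ b ∈ B, (xt * k)⁻¹ * σ (xt * k) = u' * b) ↔
        ∃ b ∈ B, (xt * k * xt⁻¹)⁻¹ * σ (xt * k * xt⁻¹) = xt * b * xt⁻¹) := by
  intro k hk
  change langMap σ xt ∈ U at hu
  change (∃ u' ∈ U, ∃ b ∈ B, langMap σ (xt * k) = u' * b) ↔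
    ∃ b ∈ B, langMap σ (xt * k * xt⁻¹) = xt * b * xt⁻¹
  rw [exists_eq_mul_iff_mul_inv_mem hBK hUK hu (Subgroup.mem_normalizer_iff.mpr huB)
    (langMap_mul_mul_inv_mem σ hσK xt hk), langMap_conj]
  simp
end
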